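/- Let S be the union of the dyadic intervals D with the two shifted collections D_± := { 2^k((0,1)+j ± (-1)^k/3) : k,j ∈ ℤ }. Then for every bounded interval I ⊂ ℝ there exists an interval J ∈ S with I ⊆ J ⊆ 4I, where 4I denotes the interval concentric with I of four times the length. -/
import Mathlib


/-- Membership in the standard dyadic grid. -/
def memDyadic (I : Set ℝ) : Prop :=
  ∃ k j : ℤ, I = Set.Ioo ((2 : ℝ) ^ k * (j : ℝ)) ((2 : ℝ) ^ k * ((j : ℝ) + 1))

/-- Membership in one of the two shifted grids `D_± = D_{1,0,±1/3}`. -/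
def memShiftedThird (I : Set ℝ) : Prop :=
  ∃ k j : ℤ, ∃ α : ℝ, (α = (1 : ℝ) / 3 ∨ α = -(1 : ℝ) / 3) ∧
    I = Set.Ioo ((2 : ℝ) ^ k * ((j : ℝ) + (-1 : ℝ) ^ k * α))
      ((2 : ℝ) ^ k * (1 + (j : ℝ) + (-1 : ℝ) ^ k * α))

theorem hankel_stmt5 (a b : ℝ) (hab : a < b) :
    ∃ J : Set ℝ, (memDyadic J ∨ memShiftedThird J) ∧
      Set.Ioo a b ⊆ J ∧
      J ⊆ Set.Ioo ((a + b) / 2 - 2 * (b - a)) ((a + b) / 2 + 2 * (b - a)) := by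
  set ℓ : ℝ := b - a with hℓdef
  have hℓpos : 0 < ℓ := by simp [hℓdef]; linarith
  obtain ⟨k₀, hk₀⟩ := exists_mem_Ico_zpow (x := 3 * ℓ / 2) (by positivity)
    (by norm_num : (1:ℝ) < 2)
  set k : ℤ := k₀ + 1 with hkdef
  have h2k : (2:ℝ) ^ k = 2 * 2 ^ k₀ := by
    rw [hkdef, zpow_add₀ (by norm_num : (2:ℝ) ≠ 0)]; ring
  have hk1 : 3 * ℓ / 2 < 2 ^ k := hk₀.2
  have hk2 : (2:ℝ) ^ k ≤ 3 * ℓ := by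
    have := hk₀.1; rw [h2k]; linarith
  set s : ℝ := 2 ^ k / 3 with hsdef
  have hspos : 0 < s := by positivity
  have hs1 : ℓ / 2 < s := by rw [hsdef]; linarith
  have hs2 : s ≤ ℓ := by rw [hsdef]; linarith
  have h3s : (2:ℝ) ^ k = 3 * s := by rw [hsdef]; ring
  set L : ℝ := max (b - 2 ^ k) (a - 3 * ℓ / 2) with hLdef
  set n : ℤ := ⌈L / s⌉ with hndef
  set t : ℝ := n * s with htdef
  have htL : L ≤ t := by
    have := Int.le_ceil (L / s)
    rw [htdef]
    calc L = L / s * s := by field_simp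
    _ ≤ n * s := by apply mul_le_mul_of_nonneg_right this hspos.le
  have htU : t < L + s := by
    have := Int.ceil_lt_add_one (L / s)
    have h2 : (n : ℝ) * s < (L / s + 1) * s := by
      apply mul_lt_mul_of_pos_right this hspos
    rw [htdef]
    calc (n:ℝ) * s < (L / s + 1) * s := h2
    _ = L + s := by field_simp
  -- the four endpoint inequalities
  have hLa1 : b - 2 ^ k ≤ t := le_trans (le_max_left _ _) htL
  have hLa2 : a - 3 * ℓ / 2 ≤ t := le_trans (le_max_right _ _) htL
  have hta : t ≤ a := by
    have h1 : b - 2 ^ k + s ≤ a := by rw [h3s]; simp only [hℓdef] at hs1 ⊢; linarith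
    have h2 : a - 3 * ℓ / 2 + s ≤ a := by linarith
    have : L + s ≤ a := by
      rw [hLdef]; rcases max_cases (b - 2 ^ k) (a - 3 * ℓ / 2) with ⟨h, _⟩ | ⟨h, _⟩ <;>
        rw [h] <;> linarith
    linarith
  have htb : b ≤ t + 2 ^ k := by linarith
  have htop : t + 2 ^ k ≤ a + 5 * ℓ / 2 := by
    have h1 : b - 2 ^ k + s + 2 ^ k ≤ a + 5 * ℓ / 2 := by
      simp only [hℓdef] at hs2 ⊢; linarith
    have h2 : a - 3 * ℓ / 2 + s + 2 ^ k ≤ a + 5 * ℓ / 2 := by rw [h3s]; linarith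
    have : L + s ≤ a + 5 * ℓ / 2 - 2 ^ k := by
      rw [hLdef]; rcases max_cases (b - 2 ^ k) (a - 3 * ℓ / 2) with ⟨h, _⟩ | ⟨h, _⟩ <;>
        rw [h] <;> linarith
    linarith
  have hbig1 : (a + b) / 2 - 2 * (b - a) ≤ t := by
    simp only [hℓdef] at hLa2; linarith
  have hbig2 : t + 2 ^ k ≤ (a + b) / 2 + 2 * (b - a) := by
    simp only [hℓdef] at htop; linarith
  refine ⟨Set.Ioo t (t + 2 ^ k), ?_, Set.Ioo_subset_Ioo hta htb,
    Set.Ioo_subset_Ioo hbig1 hbig2⟩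
  -- identify the grid interval
  have hε : (-1:ℝ) ^ k = 1 ∨ (-1:ℝ) ^ k = -1 := by
    rcases Int.even_or_odd k with h | h
    · exact Or.inl h.neg_one_zpow
    · right; rw [h.neg_zpow, one_zpow]
  set q : ℤ := n / 3 with hq
  have hr : n % 3 = 0 ∨ n % 3 = 1 ∨ n % 3 = 2 := by omega
  rcases hr with hr | hr | hr
  · -- dyadic
    left
    refine ⟨k, q, ?_⟩
    have hn3 : (n : ℝ) = 3 * q := by
      have : n = 3 * q := by omega
      rw [this]; push_cast; ring
    rw [htdef, hn3, hsdef]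
    ring_nf
  · -- shift +
    right
    have hn3 : (n : ℝ) = 3 * q + 1 := by
      have : n = 3 * q + 1 := by omega
      rw [this]; push_cast; ring
    refine ⟨k, q, (-1:ℝ) ^ k * (1/3), ?_, ?_⟩
    · rcases hε with h | h <;> rw [h] <;> [left; right] <;> norm_num
    · have hsq : (-1:ℝ) ^ k * ((-1:ℝ) ^ k * (1/3)) = 1/3 := by
        rcases hε with h | h <;> rw [h] <;> ring
      rw [htdef, hn3, hsdef, hsq]
      ring_nf
  · -- shift −
    right
    have hn3 : (n : ℝ) = 3 * q + 2 := by
      have : n = 3 * q + 2 := by omega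
      rw [this]; push_cast; ring
    refine ⟨k, q + 1, -((-1:ℝ) ^ k * (1/3)), ?_, ?_⟩
    · rcases hε with h | h <;> rw [h] <;> [right; left] <;> norm_num
    · have hsq : (-1:ℝ) ^ k * (-((-1:ℝ) ^ k * (1/3))) = -(1/3) := by
        rcases hε with h | h <;> rw [h] <;> ring
      rw [htdef, hn3, hsdef, hsq]
      push_cast
      ring_nf
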